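/- arXiv:1704.04702 — 4 statements merged into one kernel-verified Lean document; each statement's English description precedes it below -/
import Mathlib

section
/- Suppose ST = λT, SX = μX for every X ∈ V orthogonal to T, and λμ + ε c² = 0. Then G(X, T, T, Y) = 0 for all X, Y ∈ V. (This is the radial flatness, proved in the converse direction of Theorem 2, of a semi-parallel hypersurface of S^n × ℝ or H^n × ℝ whose shape operator has eigenvalue λ on T and eigenvalue μ on the orthogonal complement of T with λμ = −ε cos²θ.) -/
open scoped InnerProductSpace

/-- The Gauss quadrilinear form of a hypersurface of `Q^n(ε) × ℝ` with shape operator `S`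
and tangential vertical projection `T`: by the Gauss equation it equals `⟨R(X,Y)Z,W⟩`. -/
noncomputable def gaussForm {V : Type*} [NormedAddCommGroup V] [InnerProductSpace ℝ V]
    (S : V →ₗ[ℝ] V) (T : V) (ε : ℝ) (X Y Z W : V) : ℝ :=
  ε * (⟪X, W⟫_ℝ * ⟪Y, Z⟫_ℝ - ⟪X, Z⟫_ℝ * ⟪Y, W⟫_ℝ
      + ⟪X, T⟫_ℝ * ⟪Z, T⟫_ℝ * ⟪Y, W⟫_ℝ + ⟪Y, T⟫_ℝ * ⟪W, T⟫_ℝ * ⟪X, Z⟫_ℝ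
      - ⟪Y, T⟫_ℝ * ⟪Z, T⟫_ℝ * ⟪X, W⟫_ℝ - ⟪X, T⟫_ℝ * ⟪W, T⟫_ℝ * ⟪Y, Z⟫_ℝ)
    + ⟪S X, W⟫_ℝ * ⟪S Y, Z⟫_ℝ - ⟪S X, Z⟫_ℝ * ⟪S Y, W⟫_ℝ

/-!
Write `t = ‖T‖²` and let `Y' = t Y - ⟪T, Y⟫ T` be (a multiple of) the component of `Y` orthogonal
to `T`. Expanding, `G(X,T,T,Y) = ε (1 - t) ⟪X, Y'⟫ + λ ⟪S X, Y'⟫`, and since `S` is symmetric with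
`S Y' = μ Y'`, this is `(ε c² + λ μ) ⟪X, Y'⟫ = 0`.
-/

section

variable {V : Type*} [NormedAddCommGroup V] [InnerProductSpace ℝ V]

theorem inner_norm_sq_smul_sub_inner_smul_self (T Y : V) :
    ⟪‖T‖ ^ 2 • Y - ⟪T, Y⟫_ℝ • T, T⟫_ℝ = 0 := by
  rw [inner_sub_left, real_inner_smul_left, real_inner_smul_left, real_inner_self_eq_norm_sq,
    real_inner_comm]
  ring

theorem gaussForm_radial_of_apply_eq_smul (S : V →ₗ[ℝ] V) {T : V} (ε : ℝ) {lam : ℝ}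
    (hT : S T = lam • T) (X Y : V) :
    gaussForm S T ε X T T Y =
      ε * (1 - ‖T‖ ^ 2) * ⟪X, ‖T‖ ^ 2 • Y - ⟪T, Y⟫_ℝ • T⟫_ℝ
        + lam * ⟪S X, ‖T‖ ^ 2 • Y - ⟪T, Y⟫_ℝ • T⟫_ℝ := by
  simp only [gaussForm, hT, inner_sub_right, real_inner_smul_left, real_inner_smul_right,
    real_inner_self_eq_norm_sq, real_inner_comm Y T]
  ring

end

theorem radiallyFlat_of_semiParallel_eigen_general {V : Type*} [NormedAddCommGroup V]
    [InnerProductSpace ℝ V]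
    (S : V →ₗ[ℝ] V) (hS : S.IsSymmetric) (T : V) (ε c : ℝ)
    (hc : ‖T‖ ^ 2 + c ^ 2 = 1)
    (lam μ : ℝ) (hT : S T = lam • T)
    (hX : ∀ X : V, ⟪X, T⟫_ℝ = 0 → S X = μ • X)
    (hlm : lam * μ + ε * c ^ 2 = 0) :
    ∀ X Y : V, gaussForm S T ε X T T Y = 0 := by
  intro X Y
  have hY' := hX _ (inner_norm_sq_smul_sub_inner_smul_self T Y)
  rw [gaussForm_radial_of_apply_eq_smul S ε hT, hS, hY', real_inner_smul_right,
    ← eq_sub_of_add_eq' hc]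
  linear_combination ⟪X, ‖T‖ ^ 2 • Y - ⟪T, Y⟫_ℝ • T⟫_ℝ * hlm

/-- If `ST = λT`, `SX = μX` for every `X ⊥ T`, and `λμ + ε c² = 0`, then the hypersurface
is radially flat: `G(X,T,T,Y) = 0` for all `X, Y`. -/
theorem radiallyFlat_of_semiParallel_eigen {V : Type*} [NormedAddCommGroup V]
    [InnerProductSpace ℝ V] [FiniteDimensional ℝ V]
    (S : V →ₗ[ℝ] V) (hS : S.IsSymmetric) (T : V) (ε c : ℝ)
    (hε : ε = 1 ∨ ε = -1) (hc : ‖T‖ ^ 2 + c ^ 2 = 1)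
    (lam μ : ℝ) (hT : S T = lam • T)
    (hX : ∀ X : V, ⟪X, T⟫_ℝ = 0 → S X = μ • X)
    (hlm : lam * μ + ε * c ^ 2 = 0) :
    ∀ X Y : V, gaussForm S T ε X T T Y = 0 :=
  radiallyFlat_of_semiParallel_eigen_general S hS T ε c hc lam μ hT hX hlm
end

section
/- Suppose ST = λT, SX = μX for every X ∈ V orthogonal to T, and λμ = −ε c². Then G(X, Y, Z, SW) + G(X, Y, W, SZ) = 0 for all X, Y, Z, W ∈ V. (Since h(R(X,Y)Z,W) = ⟨R(X,Y)Z, SW⟩ = G(X,Y,Z,SW) for the second fundamental form h(X,Y) = ⟨SX,Y⟩, this is exactly the semi-parallelity condition R·h = 0; it is the core of the forward direction of Theorem 2: a radially flat hypersurface of S^n × ℝ or H^n × ℝ having T as a principal direction with nonzero principal curvature is semi-parallel.) -/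
open scoped InnerProductSpace

section

variable {V : Type*} [NormedAddCommGroup V] [InnerProductSpace ℝ V]

/-- For `T = 0` the formula holds because `(λ - μ) / 0 = 0`. -/
theorem apply_eq_smul_add_inner_smul_of_eigen {S : V →ₗ[ℝ] V} {T : V} {lam μ : ℝ}
    (hT : S T = lam • T) (hX : ∀ X : V, ⟪X, T⟫_ℝ = 0 → S X = μ • X) (A : V) :
    S A = μ • A + ((lam - μ) / ‖T‖ ^ 2 * ⟪A, T⟫_ℝ) • T := by
  rcases eq_or_ne T 0 with rfl | hT0
  · simpa using hX A (inner_zero_right A)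
  have ht : ‖T‖ ^ 2 ≠ 0 := by positivity
  obtain ⟨a, ha⟩ : ∃ a : ℝ, a * ‖T‖ ^ 2 = ⟪A, T⟫_ℝ := ⟨_, div_mul_cancel₀ _ ht⟩
  have horth : ⟪A - a • T, T⟫_ℝ = 0 := by
    rw [inner_sub_left, real_inner_smul_left, real_inner_self_eq_norm_sq, ha, sub_self]
  calc S A = S (A - a • T) + a • S T := by rw [← map_smul, ← map_add, sub_add_cancel]
    _ = μ • A + ((lam - μ) / ‖T‖ ^ 2 * ⟪A, T⟫_ℝ) • T := by
      rw [hX _ horth, hT]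
      have : (lam - μ) / ‖T‖ ^ 2 * ⟪A, T⟫_ℝ = a * lam - μ * a := by
        rw [← ha]
        field_simp
      rw [this]
      module

theorem gaussForm_add_gaussForm_of_apply_eq_smul_add_inner_smul {S : V →ₗ[ℝ] V} {T : V}
    {μ k : ℝ} (hS : ∀ A : V, S A = μ • A + (k * ⟪A, T⟫_ℝ) • T) (ε : ℝ) (X Y Z W : V) :
    gaussForm S T ε X Y Z (S W) + gaussForm S T ε X Y W (S Z) =
      k * (μ * (μ + k * ‖T‖ ^ 2) + ε * (1 - ‖T‖ ^ 2)) *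
        (⟪Y, Z⟫_ℝ * ⟪X, T⟫_ℝ * ⟪W, T⟫_ℝ + ⟪Y, W⟫_ℝ * ⟪X, T⟫_ℝ * ⟪Z, T⟫_ℝ
          - ⟪X, Z⟫_ℝ * ⟪Y, T⟫_ℝ * ⟪W, T⟫_ℝ - ⟪X, W⟫_ℝ * ⟪Y, T⟫_ℝ * ⟪Z, T⟫_ℝ) := by
  have hleft : ∀ A B : V, ⟪S A, B⟫_ℝ = μ * ⟪A, B⟫_ℝ + k * ⟪A, T⟫_ℝ * ⟪B, T⟫_ℝ := fun A B => by
    rw [hS, inner_add_left, real_inner_smul_left, real_inner_smul_left, real_inner_comm T B]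
  have hright : ∀ A B : V, ⟪A, S B⟫_ℝ = μ * ⟪A, B⟫_ℝ + k * ⟪A, T⟫_ℝ * ⟪B, T⟫_ℝ := fun A B => by
    rw [hS, inner_add_right, real_inner_smul_right, real_inner_smul_right]
    ring
  simp only [gaussForm, hleft, hright, real_inner_self_eq_norm_sq]
  ring

end

theorem semiParallel_of_radiallyFlat_eigen_general {V : Type*} [NormedAddCommGroup V]
    [InnerProductSpace ℝ V]
    (S : V →ₗ[ℝ] V) (T : V) (ε c : ℝ)
    (hc : ‖T‖ ^ 2 + c ^ 2 = 1)
    (lam μ : ℝ) (hT : S T = lam • T)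
    (hX : ∀ X : V, ⟪X, T⟫_ℝ = 0 → S X = μ • X)
    (hlm : lam * μ = -(ε * c ^ 2)) :
    ∀ X Y Z W : V, gaussForm S T ε X Y Z (S W) + gaussForm S T ε X Y W (S Z) = 0 := by
  intro X Y Z W
  set k := (lam - μ) / ‖T‖ ^ 2 with hk
  rw [gaussForm_add_gaussForm_of_apply_eq_smul_add_inner_smul
    (apply_eq_smul_add_inner_smul_of_eigen hT hX) ε X Y Z W]
  suffices k * (μ * (μ + k * ‖T‖ ^ 2) + ε * (1 - ‖T‖ ^ 2)) = 0 by rw [this, zero_mul]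
  rcases eq_or_ne (‖T‖ ^ 2) 0 with ht | ht
  · simp [hk, ht]
  · have hlam : μ + k * ‖T‖ ^ 2 = lam := by rw [hk, div_mul_cancel₀ _ ht, add_sub_cancel]
    rw [hlam, ← hc, add_sub_cancel_left]
    linear_combination k * hlm

/-- If `ST = λT`, `SX = μX` for every `X ⊥ T`, and `λμ = −ε c²`, then the hypersurface is
semi-parallel: `G(X,Y,Z,SW) + G(X,Y,W,SZ) = 0` for all `X, Y, Z, W`, i.e. `R·h = 0`. -/
theorem semiParallel_of_radiallyFlat_eigen {V : Type*} [NormedAddCommGroup V]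
    [InnerProductSpace ℝ V] [FiniteDimensional ℝ V]
    (S : V →ₗ[ℝ] V) (hS : S.IsSymmetric) (T : V) (ε c : ℝ)
    (hε : ε = 1 ∨ ε = -1) (hc : ‖T‖ ^ 2 + c ^ 2 = 1)
    (lam μ : ℝ) (hT : S T = lam • T)
    (hX : ∀ X : V, ⟪X, T⟫_ℝ = 0 → S X = μ • X)
    (hlm : lam * μ = -(ε * c ^ 2)) :
    ∀ X Y Z W : V, gaussForm S T ε X Y Z (S W) + gaussForm S T ε X Y W (S Z) = 0 :=
  semiParallel_of_radiallyFlat_eigen_general S T ε c hc lam μ hT hX hlm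
end

section
/- Let e_1, …, e_n be an orthonormal basis of V consisting of eigenvectors of S, say S e_a = μ_a e_a, with T = ‖T‖ e_1. Then for all indices i, j, k, l in {1, …, n}: −G(e_i, e_j, e_k, S e_l) − G(e_i, e_j, e_l, S e_k) = −(μ_l − μ_k)[(ε + μ_i μ_j) R⁰_{ijkl} + ε ‖T‖² (δ_{k1} R⁰_{ijl1} + δ_{l1} R⁰_{ij1k})], where R⁰_{abcd} := δ_{ad} δ_{bc} − δ_{ac} δ_{bd} and δ is the Kronecker delta. (This is the coordinate expression of the tensor (R·h)(e_i, e_j, e_k, e_l) = −h(R(e_i,e_j)e_k, e_l) − h(R(e_i,e_j)e_l, e_k) used in the proof of Theorem 2.) -/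
open scoped InnerProductSpace

/-- The Kronecker delta on `Fin n`, valued in `ℝ`. -/
def kron {n : ℕ} (a b : Fin n) : ℝ := if a = b then 1 else 0

/-- The curvature-like tensor `R⁰_{abcd} = δ_{ad} δ_{bc} − δ_{ac} δ_{bd}`. -/
def R0 {n : ℕ} (a b c d : Fin n) : ℝ := kron a d * kron b c - kron a c * kron b d

set_option maxHeartbeats 2000000 in
/-- Coordinate expression of `(R·h)(e_i,e_j,e_k,e_l)` in a principal orthonormal frame with
`T = ‖T‖ e_1`. -/
theorem semiParallel_tensor_coordinates {V : Type*} [NormedAddCommGroup V]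
    [InnerProductSpace ℝ V] [FiniteDimensional ℝ V] {n : ℕ} (hn : 0 < n)
    (S : V →ₗ[ℝ] V) (hS : S.IsSymmetric) (T : V) (ε c : ℝ)
    (hε : ε = 1 ∨ ε = -1) (hc : ‖T‖ ^ 2 + c ^ 2 = 1)
    (e : OrthonormalBasis (Fin n) ℝ V) (μ : Fin n → ℝ)
    (hSe : ∀ a : Fin n, S (e a) = μ a • e a)
    (hT : T = ‖T‖ • e ⟨0, hn⟩) :
    ∀ i j k l : Fin n,
      -gaussForm S T ε (e i) (e j) (e k) (S (e l))
        - gaussForm S T ε (e i) (e j) (e l) (S (e k)) =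
      -(μ l - μ k) * ((ε + μ i * μ j) * R0 i j k l
        + ε * ‖T‖ ^ 2 * (kron k ⟨0, hn⟩ * R0 i j l ⟨0, hn⟩
          + kron l ⟨0, hn⟩ * R0 i j ⟨0, hn⟩ k)) := by
  intro i j k l
  have hip : ∀ a b : Fin n, ⟪e a, e b⟫_ℝ = kron a b := fun a b => by
    rw [orthonormal_iff_ite.mp e.orthonormal]; rfl
  have hiT : ∀ a : Fin n, ⟪e a, T⟫_ℝ = ‖T‖ * kron a ⟨0, hn⟩ := fun a => by
    conv_lhs => rw [hT]
    rw [real_inner_smul_right, hip]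
  simp only [gaussForm, hSe, real_inner_smul_left, real_inner_smul_right, inner_smul_left,
    inner_smul_right, hip, hiT, R0, kron, conj_trivial]
  split_ifs <;> first | (subst_vars; ring) | simp_all
end

section
/- Let n ≥ 2 and let e_1, …, e_n be an orthonormal basis of V with T = ‖T‖ e_1, S e_1 = λ e_1, and S e_a = μ e_a for all a ≥ 2. Then for every i ≥ 2, the Ricci curvature in the direction e_i, given by Ric(e_i, e_i) = Σ_{j=1}^n G(e_j, e_i, e_i, e_j), equals (n−2)(μ² + ε) + ε c² + λ μ. (This is the Ricci curvature formula, derived from the Gauss equation, for a hypersurface of S^n × ℝ or H^n × ℝ whose shape operator has eigenvalue λ on the principal direction T and eigenvalue μ of multiplicity n−1; it is the key computation in the proof of Corollary 12 on Ricci solitons with potential vector field T.) -/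
open scoped InnerProductSpace

set_option maxRecDepth 100000 in
/-- Ricci curvature formula `Ric(e_i,e_i) = (n−2)(μ²+ε) + ε c² + λμ` for directions `e_i`
orthogonal to the principal direction `T`, when the shape operator has eigenvalue `λ` on
`T = ‖T‖ e_1` and eigenvalue `μ` of multiplicity `n−1`. -/
theorem ricci_curvature_formula {V : Type*} [NormedAddCommGroup V]
    [InnerProductSpace ℝ V] [FiniteDimensional ℝ V] {n : ℕ} (hn : 2 ≤ n)
    (S : V →ₗ[ℝ] V) (hS : S.IsSymmetric) (T : V) (ε c : ℝ)
    (hε : ε = 1 ∨ ε = -1) (hc : ‖T‖ ^ 2 + c ^ 2 = 1)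
    (e : OrthonormalBasis (Fin n) ℝ V) (lam μ : ℝ)
    (hT : T = ‖T‖ • e ⟨0, by omega⟩)
    (hS1 : S (e ⟨0, by omega⟩) = lam • e ⟨0, by omega⟩)
    (hSa : ∀ a : Fin n, a ≠ ⟨0, by omega⟩ → S (e a) = μ • e a) :
    ∀ i : Fin n, i ≠ ⟨0, by omega⟩ →
      ∑ j : Fin n, gaussForm S T ε (e j) (e i) (e i) (e j) =
        ((n : ℝ) - 2) * (μ ^ 2 + ε) + ε * c ^ 2 + lam * μ := by
  intro i hi
  have key := orthonormal_iff_ite.mp e.orthonormal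
  have ht : ‖T‖ * ‖T‖ = 1 - c ^ 2 := by nlinarith [hc]
  set z : Fin n := ⟨0, by omega⟩
  generalize hgen : ‖T‖ = t at hT ht
  have hval : ∀ j : Fin n, gaussForm S T ε (e j) (e i) (e i) (e j) =
      (if j = z then (ε * c ^ 2 + lam * μ) - (μ ^ 2 + ε) else 0) +
      (if j = i then -(μ ^ 2 + ε) else 0) + (μ ^ 2 + ε) := by
    intro j
    by_cases hj0 : j = z
    · subst hj0
      have h1 : z ≠ i := Ne.symm hi
      simp [gaussForm, hT, hS1, hSa i hi, real_inner_smul_left, real_inner_smul_right, key, hi, h1]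
      exact Or.inl (by linarith)
    · by_cases hji : j = i
      · subst hji
        simp [gaussForm, hT, hSa j hj0, real_inner_smul_left, real_inner_smul_right,
          key, hj0, hi]
      · simp [gaussForm, hT, hS1, hSa j hj0, hSa i hi, real_inner_smul_left,
          real_inner_smul_right, key, hj0, hji, hi, Ne.symm hji]
        ring
  rw [Finset.sum_congr rfl fun j _ => hval j]
  rw [Finset.sum_add_distrib, Finset.sum_add_distrib, Finset.sum_const,
    Finset.sum_ite_eq' Finset.univ z, Finset.sum_ite_eq' Finset.univ i]
  simp only [Finset.mem_univ, if_pos, Finset.card_univ, Fintype.card_fin, nsmul_eq_mul]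
  have : (2:ℝ) ≤ (n:ℝ) := by exact_mod_cast hn
  ring
end
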